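/- The function E defined by E(z) = 0 if ‖z‖ ≤ R, E(z) = (‖z‖ - R)²/2 if R ≤ ‖z‖ ≤ (1+α)R, E(z) = αR‖z‖ - α(1+α/2)R² if ‖z‖ ≥ (1+α)R, is 1-smooth: for all z, w ∈ ℝᵈ, E(w) ≤ E(z) + ⟨∇E(z), w - z⟩ + (1/2)‖w - z‖². -/

import Mathlib

/-!
With `h(x) = (max x 0)² / 2`, `r = ‖z‖` and `s = ‖w‖`, the energy is the radial profile
`E z = h(r - R) - h(r - (1 + α) R)`, whose derivative is `φ(r/R) r`. As `h` is convex and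
`1`-smooth, the first summand lies below its tangent at `r` plus `(s - r)² / 2` and the second,
concave, summand below its tangent: this is the scalar descent inequality. It lifts to `E` because
`φ(r/R) ≤ 1`, so the Cauchy–Schwarz loss `⟪z, w⟫ ≤ r s` enters with the weight `1 - φ(r/R) ≥ 0`.
-/

open RealInnerProductSpace

noncomputable def halfPosPartSq (x : ℝ) : ℝ := max x 0 ^ 2 / 2

theorem halfPosPartSq_add_tangent_le (x y : ℝ) :
    halfPosPartSq x + max x 0 * (y - x) ≤ halfPosPartSq y := by
  unfold halfPosPartSq
  rcases le_total x 0 with hx | hx <;> rcases le_total y 0 with hy | hy <;>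
    simp only [max_eq_left, max_eq_right, hx, hy] <;> nlinarith [sq_nonneg (y - x)]

theorem halfPosPartSq_le_tangent_add_sq (x y : ℝ) :
    halfPosPartSq y ≤ halfPosPartSq x + max x 0 * (y - x) + (y - x) ^ 2 / 2 := by
  unfold halfPosPartSq
  rcases le_total x 0 with hx | hx <;> rcases le_total y 0 with hy | hy <;>
    simp only [max_eq_left, max_eq_right, hx, hy] <;> nlinarith [sq_nonneg (y - x)]

noncomputable def energyProfile (a b t : ℝ) : ℝ := halfPosPartSq (t - a) - halfPosPartSq (t - b)

def energySlope (a b t : ℝ) : ℝ := max (t - a) 0 - max (t - b) 0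

theorem energyProfile_le_tangent_add_sq (a b r s : ℝ) :
    energyProfile a b s ≤ energyProfile a b r + energySlope a b r * (s - r) + (s - r) ^ 2 / 2 := by
  have hsmooth := halfPosPartSq_le_tangent_add_sq (r - a) (s - a)
  have hconvex := halfPosPartSq_add_tangent_le (r - b) (s - b)
  simp only [energyProfile, energySlope, sub_sub_sub_cancel_right] at *
  linarith

theorem eq_energyProfile_norm {F : Type*} [NormedAddCommGroup F] {R α : ℝ} (hR : 0 ≤ R)
    (hα : 0 ≤ α) {E : F → ℝ} (hE1 : ∀ z, ‖z‖ ≤ R → E z = 0)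
    (hE2 : ∀ z, R ≤ ‖z‖ → ‖z‖ ≤ (1 + α) * R → E z = (‖z‖ - R) ^ 2 / 2)
    (hE3 : ∀ z, (1 + α) * R ≤ ‖z‖ → E z = α * R * ‖z‖ - α * (1 + α / 2) * R ^ 2) (z : F) :
    E z = energyProfile R ((1 + α) * R) ‖z‖ := by
  have hαR : 0 ≤ α * R := mul_nonneg hα hR
  unfold energyProfile halfPosPartSq
  rcases le_total ‖z‖ R with h1 | h1
  · rw [hE1 z h1, max_eq_right (by linarith), max_eq_right (by linarith)]
    ring
  rcases le_total ‖z‖ ((1 + α) * R) with h2 | h2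
  · rw [hE2 z h1 h2, max_eq_left (by linarith), max_eq_right (by linarith)]
    ring
  · rw [hE3 z h2, max_eq_left (by linarith), max_eq_left (by linarith)]
    ring

theorem le_one_and_mul_eq_energySlope {R α : ℝ} (hR : 0 < R) (hα : 0 ≤ α) {φ : ℝ → ℝ}
    (hφ1 : ∀ u : ℝ, u ≤ 1 → φ u = 0)
    (hφ2 : ∀ u : ℝ, 1 ≤ u → u ≤ 1 + α → φ u = 1 - 1 / u)
    (hφ3 : ∀ u : ℝ, 1 + α ≤ u → φ u = α / u) (r : ℝ) :
    φ (r / R) ≤ 1 ∧ φ (r / R) * r = energySlope R ((1 + α) * R) r := by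
  have hαR : 0 ≤ α * R := mul_nonneg hα hR.le
  unfold energySlope
  rcases le_total r R with h1 | h1
  · rw [hφ1 _ ((div_le_one hR).2 h1), max_eq_right (by linarith), max_eq_right (by linarith)]
    norm_num
  have hr : 0 < r := hR.trans_le h1
  rcases le_total r ((1 + α) * R) with h2 | h2
  · rw [hφ2 _ ((le_div_iff₀ hR).2 (by linarith)) ((div_le_iff₀ hR).2 h2), one_div_div,
      max_eq_left (by linarith), max_eq_right (by linarith)]
    refine ⟨by linarith [div_nonneg hR.le hr.le], ?_⟩
    field_simp
    ring
  · rw [hφ3 _ ((le_div_iff₀ hR).2 h2), max_eq_left (by linarith), max_eq_left (by linarith),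
      div_div_eq_mul_div]
    refine ⟨(div_le_one hr).2 (by linarith), ?_⟩
    field_simp
    ring

theorem radial_lower_bound {F : Type*} [NormedAddCommGroup F] [InnerProductSpace ℝ F] {c : ℝ}
    (hc : c ≤ 1) (z w : F) :
    c * ‖z‖ * (‖w‖ - ‖z‖) + (‖w‖ - ‖z‖) ^ 2 / 2 ≤ ⟪c • z, w - z⟫ + 1 / 2 * ‖w - z‖ ^ 2 := by
  rw [real_inner_smul_left, inner_sub_right, real_inner_self_eq_norm_sq, norm_sub_sq_real,
    real_inner_comm z w]
  linarith [mul_nonneg (sub_nonneg.2 hc) (sub_nonneg.2 (real_inner_le_norm z w))]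

/-- The energy function E is 1-smooth:
E(w) ≤ E(z) + ⟪∇E(z), w - z⟫ + ‖w - z‖²/2, with ∇E(z) = φ(‖z‖/R)·z. -/
theorem energy_function_one_smooth
    {d : ℕ} (R α : ℝ) (hR : 0 < R) (hα : 0 < α)
    (φ : ℝ → ℝ)
    (hφ1 : ∀ u : ℝ, u ≤ 1 → φ u = 0)
    (hφ2 : ∀ u : ℝ, 1 ≤ u → u ≤ 1 + α → φ u = 1 - 1 / u)
    (hφ3 : ∀ u : ℝ, 1 + α ≤ u → φ u = α / u)
    (E : EuclideanSpace ℝ (Fin d) → ℝ)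
    (hE1 : ∀ z, ‖z‖ ≤ R → E z = 0)
    (hE2 : ∀ z, R ≤ ‖z‖ → ‖z‖ ≤ (1 + α) * R → E z = (‖z‖ - R) ^ 2 / 2)
    (hE3 : ∀ z, (1 + α) * R ≤ ‖z‖ → E z = α * R * ‖z‖ - α * (1 + α / 2) * R ^ 2) :
    ∀ z w : EuclideanSpace ℝ (Fin d),
      E w ≤ E z + ⟪φ (‖z‖ / R) • z, w - z⟫ + (1 / 2) * ‖w - z‖ ^ 2 := by
  intro z w
  obtain ⟨hφ_le_one, hφ_slope⟩ := le_one_and_mul_eq_energySlope hR hα.le hφ1 hφ2 hφ3 ‖z‖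
  have hE := eq_energyProfile_norm hR.le hα.le hE1 hE2 hE3
  calc E w ≤ E z + energySlope R ((1 + α) * R) ‖z‖ * (‖w‖ - ‖z‖) + (‖w‖ - ‖z‖) ^ 2 / 2 := by
        rw [hE w, hE z]
        exact energyProfile_le_tangent_add_sq _ _ _ _
    _ ≤ E z + ⟪φ (‖z‖ / R) • z, w - z⟫ + (1 / 2) * ‖w - z‖ ^ 2 := by
        rw [← hφ_slope]
        linarith [radial_lower_bound hφ_le_one z w]
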